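/- arXiv:2406.16234 — 2 statements merged into one kernel-verified Lean document; each statement's English description precedes it below -/
import Mathlib

section
/- Multiple robustness of the one-step functional (the 'k+1 chances of consistency' property): fix an integer k ≥ 1, adopt the core setup and the candidate-nuisance setup with Y_j integrable. Suppose there exists m₀ ∈ {0, 1, …, k} such that (i) for every m with 1 ≤ m ≤ m₀, p̂_m = p_m a.s. under P(·|B_{m−1}), and (ii) for every m with m₀ < m ≤ k, Q̂^m = Q^{j,k,m} a.s. under P(·|B_{m−1}). Then E_P[ φ̃ ] = φ_{j,k}, where φ̃ := Σ_{m=1}^k 1_{B_m} ĝ_m^{−1}(Q̂^{m+1} − Q̂^m) + Q̂^1. In particular, correct specification of all outcome regressions (m₀ = 0) or of all propensity scores (m₀ = k) each suffices for unbiasedness. -/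
/-!
Write `a m = ∫_{B m} ĝ_m⁻¹ Q̂^{m+1}` and `b m = ∫_{B m} ĝ_m⁻¹ Q̂^m`, so that
`E[φ̃] = a 0 + ∑_{m=1}^k (a m - b m)`. Two identities drive everything. The tower property
under `P(·|B m)` gives `∫_{B m} f Q^{m+1} = ∫_{B m} f Q^m` for bounded `𝒲 m`-measurable `f`,
so `a m = b m` once `m > m₀` (where `Q̂ = Q`). Since `p m = P(B m | 𝒲 m)` under `P(·|B (m-1))`,
inverse weighting gives `∫_{B m} f / p m = ∫_{B (m-1)} f` for `𝒲 m`-measurable `f`, so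
`b m = a (m-1)` as long as `m ≤ m₀` (where `p̂ = p`). The sum therefore telescopes to `a m₀`,
which equals `∫_{B m₀} g_{m₀}⁻¹ Q^{m₀+1}`; alternating the same two identities with the true
nuisances walks this down to `∫_{B 0} Q^1 = φ_{j,k}`.
-/

open MeasureTheory ProbabilityTheory Finset

theorem antitoneOn_Iic_of_succ_le {α : Type*} [Preorder α] {f : ℕ → α} {k : ℕ}
    (hf : ∀ m, m < k → f (m + 1) ≤ f m) : AntitoneOn f (Set.Iic k) :=
  antitoneOn_of_succ_le Set.ordConnected_Iic fun m _ _ hm => by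
    rw [Order.succ_eq_add_one] at hm ⊢
    exact hf m (Set.mem_Iic.1 hm)

theorem monotoneOn_Icc_of_le_succ {α : Type*} [Preorder α] {f : ℕ → α} {a k : ℕ}
    (hf : ∀ m, a ≤ m → m < k → f m ≤ f (m + 1)) : MonotoneOn f (Set.Icc a k) :=
  monotoneOn_of_le_succ Set.ordConnected_Icc fun m _ hm hm' => by
    rw [Order.succ_eq_add_one] at hm' ⊢
    exact hf m hm.1 hm'.2

theorem sum_Icc_sub_add_eq_of_telescope {a b : ℕ → ℝ} {m₀ k : ℕ} (hm₀ : m₀ ≤ k)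
    (hlow : ∀ n, n < m₀ → b (n + 1) = a n)
    (hhigh : ∀ n, m₀ ≤ n → n < k → a (n + 1) = b (n + 1)) :
    ∑ m ∈ Icc 1 k, (a m - b m) + a 0 = a m₀ := by
  rw [← Ico_add_one_right_eq_Icc, ← zero_add 1, ← sum_Ico_add',
    ← sum_Ico_consecutive _ (Nat.zero_le m₀) hm₀,
    sum_congr rfl fun n hn => by rw [hlow n (mem_Ico.1 hn).2], sum_Ico_sub a (Nat.zero_le m₀),
    sum_eq_zero fun n hn => by rw [hhigh n (mem_Ico.1 hn).1 (mem_Ico.1 hn).2, sub_self]]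
  ring

section CondIntegral

variable {Ω : Type*} {mΩ : MeasurableSpace Ω} {μ : Measure Ω} [IsFiniteMeasure μ]
  {s t : Set Ω}

theorem setIntegral_eq_toReal_mul_integral_cond (f : Ω → ℝ) :
    ∫ x in s, f x ∂μ = (μ s).toReal * ∫ x, f x ∂μ[|s] := by
  rcases eq_or_ne (μ s) 0 with hs | hs
  · simp [Measure.restrict_eq_zero.2 hs, hs]
  rw [ProbabilityTheory.cond, integral_smul_measure, smul_eq_mul, ENNReal.toReal_inv,
    ← mul_assoc, mul_inv_cancel₀ (ENNReal.toReal_ne_zero.2 ⟨hs, measure_ne_top μ s⟩), one_mul]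

theorem setIntegral_congr_of_ae_cond {f g : Ω → ℝ} (h : f =ᵐ[μ[|s]] g) :
    ∫ x in s, f x ∂μ = ∫ x in s, g x ∂μ := by
  rw [setIntegral_eq_toReal_mul_integral_cond, setIntegral_eq_toReal_mul_integral_cond,
    integral_congr_ae h]

theorem integrable_cond_iff_integrableOn {f : Ω → ℝ} :
    Integrable f μ[|s] ↔ IntegrableOn f s μ := by
  rcases eq_or_ne (μ s) 0 with hs | hs
  · simp [cond_eq_zero_of_meas_eq_zero hs, IntegrableOn, Measure.restrict_eq_zero.2 hs]
  exact integrable_smul_measure (ENNReal.inv_ne_zero.2 (measure_ne_top μ s))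
    (ENNReal.inv_ne_top.2 hs)

theorem cond_absolutelyContinuous_cond_of_subset (hts : t ⊆ s) : μ[|t] ≪ μ[|s] :=
  Measure.smul_absolutelyContinuous.trans <|
    (Measure.restrict_mono hts le_rfl).absolutelyContinuous.trans <|
      Measure.absolutelyContinuous_smul (ENNReal.inv_ne_zero.2 (measure_ne_top μ s))

end CondIntegral

section PullOut

variable {Ω : Type*} {𝒢 mΩ : MeasurableSpace Ω} {μ : Measure Ω} [IsFiniteMeasure μ]
  {s t : Set Ω} {f X Z : Ω → ℝ}

theorem integral_mul_eq_of_ae_eq_condExp (h𝒢 : 𝒢 ≤ mΩ) (hf : Measurable[𝒢] f)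
    (hX : Integrable X μ) (hfX : Integrable (f * X) μ) (hZ : Z =ᵐ[μ] μ[X|𝒢]) :
    ∫ x, f x * X x ∂μ = ∫ x, f x * Z x ∂μ ∧ Integrable (f * Z) μ := by
  have hpull : μ[f * X|𝒢] =ᵐ[μ] f * Z :=
    (condExp_mul_of_stronglyMeasurable_left hf.stronglyMeasurable hfX hX).trans
      (Filter.EventuallyEq.rfl.mul hZ.symm)
  exact ⟨(integral_condExp h𝒢).symm.trans (integral_congr_ae hpull),
    integrable_condExp.congr hpull⟩

theorem setIntegral_mul_eq_of_ae_eq_condExp_cond (h𝒢 : 𝒢 ≤ mΩ) (hf : Measurable[𝒢] f)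
    (hX : IntegrableOn X s μ) (hfX : IntegrableOn (f * X) s μ)
    (hZ : Z =ᵐ[μ[|s]] (μ[|s])[X|𝒢]) :
    ∫ x in s, f x * X x ∂μ = ∫ x in s, f x * Z x ∂μ := by
  rw [setIntegral_eq_toReal_mul_integral_cond, setIntegral_eq_toReal_mul_integral_cond,
    (integral_mul_eq_of_ae_eq_condExp h𝒢 hf (integrable_cond_iff_integrableOn.2 hX)
      (integrable_cond_iff_integrableOn.2 hfX) hZ).1]

theorem setIntegral_div_eq_of_ae_eq_condExp_indicator (h𝒢 : 𝒢 ≤ mΩ) (ht : MeasurableSet t)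
    (hts : t ⊆ s) {π : Ω → ℝ} (hf : Measurable[𝒢] f) (hπm : Measurable[𝒢] π)
    (hπ : π =ᵐ[μ[|s]] (μ[|s])[t.indicator (fun _ => (1 : ℝ))|𝒢])
    (hπ0 : ∀ᵐ x ∂μ[|s], π x ≠ 0) (hfπ : IntegrableOn (fun x => f x / π x) t μ) :
    ∫ x in t, f x / π x ∂μ = ∫ x in s, f x ∂μ ∧ IntegrableOn f s μ := by
  set F : Ω → ℝ := fun x => f x / π x
  have hFX : F * t.indicator (fun _ => (1 : ℝ)) = t.indicator F := by
    ext x; by_cases hx : x ∈ t <;> simp [hx]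
  have hFπ : F * π =ᵐ[μ[|s]] f := by
    filter_upwards [hπ0] with x hx
    simp [F, div_mul_cancel₀ _ hx]
  have hFm : Measurable[𝒢] F := hf.div hπm
  have hFXint : IntegrableOn (F * t.indicator (fun _ => (1 : ℝ))) s μ :=
    hFX ▸ ((integrable_indicator_iff ht).2 hfπ).integrableOn
  obtain ⟨hint, hintF⟩ := integral_mul_eq_of_ae_eq_condExp h𝒢 hFm
    ((integrable_const 1).indicator ht) (integrable_cond_iff_integrableOn.2 hFXint) hπ
  refine ⟨?_, integrable_cond_iff_integrableOn.1 (hintF.congr hFπ)⟩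
  calc ∫ x in t, F x ∂μ = ∫ x in s, t.indicator F x ∂μ := by
        rw [setIntegral_indicator ht, Set.inter_eq_self_of_subset_right hts]
    _ = (μ s).toReal * ∫ x, F x * π x ∂μ[|s] := by
        rw [setIntegral_eq_toReal_mul_integral_cond, ← hint, ← hFX]; rfl
    _ = ∫ x in s, f x ∂μ := by
        rw [setIntegral_eq_toReal_mul_integral_cond, ← integral_congr_ae hFπ]; rfl

end PullOut

section CumProd

variable {Ω : Type*} {mΩ : MeasurableSpace Ω}

def cumProd (p : ℕ → Ω → ℝ) (m : ℕ) (ω : Ω) : ℝ := ∏ s ∈ Icc 1 m, p s ω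

@[simp]
theorem cumProd_zero (p : ℕ → Ω → ℝ) (ω : Ω) : cumProd p 0 ω = 1 := by simp [cumProd]

theorem cumProd_succ (p : ℕ → Ω → ℝ) (m : ℕ) (ω : Ω) :
    cumProd p (m + 1) ω = cumProd p m ω * p (m + 1) ω :=
  prod_Icc_succ_top (by omega) _

theorem measurable_cumProd {𝒲 : ℕ → MeasurableSpace Ω} {p : ℕ → Ω → ℝ} {k : ℕ}
    (h𝒲 : MonotoneOn 𝒲 (Set.Icc 1 k)) (hp : ∀ m, 1 ≤ m → m ≤ k → Measurable[𝒲 m] (p m))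
    {n m : ℕ} (hnm : n ≤ m) (hm : 1 ≤ m) (hmk : m ≤ k) : Measurable[𝒲 m] (cumProd p n) :=
  Finset.measurable_prod _ fun s hs => by
    obtain ⟨hs1, hsn⟩ := mem_Icc.1 hs
    exact (hp s hs1 (by omega)).mono (h𝒲 ⟨hs1, by omega⟩ ⟨hm, hmk⟩ (by omega)) le_rfl

theorem ae_norm_inv_le_of_le {μ : Measure Ω} {f : Ω → ℝ} {ε : ℝ} (hε : 0 < ε)
    (hf : ∀ᵐ ω ∂μ, ε ≤ f ω) : ∀ᵐ ω ∂μ, ‖(f ω)⁻¹‖ ≤ ε⁻¹ := by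
  filter_upwards [hf] with ω hω
  rw [norm_inv, Real.norm_of_nonneg (hε.le.trans hω)]
  exact inv_anti₀ hε hω

theorem ae_norm_inv_cumProd_le {μ : Measure Ω} {p : ℕ → Ω → ℝ} {ε : ℝ} (hε : 0 < ε) {n : ℕ}
    (hp : ∀ s, 1 ≤ s → s ≤ n → ∀ᵐ ω ∂μ, ε ≤ p s ω) :
    ∀ᵐ ω ∂μ, ‖(cumProd p n ω)⁻¹‖ ≤ (ε ^ n)⁻¹ := by
  have hall : ∀ᵐ ω ∂μ, ∀ s ∈ Icc 1 n, ε ≤ p s ω :=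
    (Filter.eventually_all_finset _).2 fun s hs => hp s (mem_Icc.1 hs).1 (mem_Icc.1 hs).2
  refine ae_norm_inv_le_of_le (pow_pos hε n) ?_
  filter_upwards [hall] with ω hω
  calc ε ^ n = ∏ _s ∈ Icc 1 n, ε := by simp
    _ ≤ cumProd p n ω := prod_le_prod (fun _ _ => hε.le) hω

end CumProd

theorem integral_sum_indicator_mul_sub_add_eq {Ω : Type*} {mΩ : MeasurableSpace Ω}
    {μ : Measure Ω} {k : ℕ} {B : ℕ → Set Ω}
    {w V : ℕ → Ω → ℝ} (hB : ∀ m ∈ Icc 1 k, MeasurableSet (B m))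
    (hV : ∀ m ∈ Icc 1 k, IntegrableOn (fun ω => w m ω * V (m + 1) ω) (B m) μ ∧
      IntegrableOn (fun ω => w m ω * V m ω) (B m) μ)
    (hV1 : Integrable (V 1) μ) :
    ∫ ω, (∑ m ∈ Icc 1 k, (B m).indicator (fun ω' => w m ω' * (V (m + 1) ω' - V m ω')) ω
      + V 1 ω) ∂μ
      = ∑ m ∈ Icc 1 k, (∫ ω in B m, w m ω * V (m + 1) ω ∂μ - ∫ ω in B m, w m ω * V m ω ∂μ)
        + ∫ ω, V 1 ω ∂μ := by
  have hterm : ∀ m ∈ Icc 1 k, Integrable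
      ((B m).indicator fun ω' => w m ω' * (V (m + 1) ω' - V m ω')) μ := fun m hm =>
    (integrable_indicator_iff (hB m hm)).2 <| by
      simp only [mul_sub]; exact (hV m hm).1.sub (hV m hm).2
  rw [integral_add (integrable_finsetSum _ hterm) hV1, integral_finsetSum _ hterm]
  congr 1
  refine sum_congr rfl fun m hm => ?_
  rw [integral_indicator (hB m hm), ← integral_sub (hV m hm).1 (hV m hm).2]
  simp only [mul_sub]

section Setup

variable {Ω : Type*} [mΩ : MeasurableSpace Ω]

/- The paper's core and candidate-nuisance setups; its weights `g_m` and `ĝ_m` are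
`cumProd p m` and `cumProd phat m`. -/

structure CoreSetup (P : Measure Ω) (k : ℕ) (B : ℕ → Set Ω) (𝒲 : ℕ → MeasurableSpace Ω)
    (ε : ℝ) (p Q : ℕ → Ω → ℝ) : Prop where
  measurableSet_B : ∀ m ≤ k, MeasurableSet (B m)
  antitoneOn_B : AntitoneOn B (Set.Iic k)
  ae_mem_B_zero : ∀ᵐ ω ∂P, ω ∈ B 0
  W_le : ∀ m, 1 ≤ m → m ≤ k → 𝒲 m ≤ mΩ
  monotoneOn_W : MonotoneOn 𝒲 (Set.Icc 1 k)
  pos : 0 < ε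
  measurable_p : ∀ m, 1 ≤ m → m ≤ k → Measurable[𝒲 m] (p m)
  p_ae_eq_condExp : ∀ m, 1 ≤ m → m ≤ k →
    p m =ᵐ[P[|B (m - 1)]] (P[|B (m - 1)])[(B m).indicator (fun _ => (1 : ℝ))|𝒲 m]
  le_p : ∀ m, 1 ≤ m → m ≤ k → ∀ᵐ ω ∂P, ε ≤ p m ω
  measurable_Q : ∀ m, 1 ≤ m → m ≤ k → Measurable[𝒲 m] (Q m)
  Q_ae_eq_condExp : ∀ m, 1 ≤ m → m ≤ k → Q m =ᵐ[P[|B m]] (P[|B m])[Q (m + 1)|𝒲 m]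
  integrable_Q_top : Integrable (Q (k + 1)) P

structure CandidateSetup (P : Measure Ω) (k : ℕ) (𝒲 : ℕ → MeasurableSpace Ω) (ε : ℝ)
    (phat Qhat : ℕ → Ω → ℝ) : Prop where
  measurable_phat : ∀ m, 1 ≤ m → m ≤ k → Measurable[𝒲 m] (phat m)
  le_phat : ∀ m, 1 ≤ m → m ≤ k → ∀ᵐ ω ∂P, ε ≤ phat m ω
  measurable_Qhat : ∀ m, 1 ≤ m → m ≤ k → Measurable[𝒲 m] (Qhat m)
  bounded_Qhat : ∀ m, 1 ≤ m → m ≤ k → ∃ C, ∀ ω, |Qhat m ω| ≤ C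

namespace CoreSetup

variable {P : Measure Ω} {k : ℕ} {B : ℕ → Set Ω} {𝒲 : ℕ → MeasurableSpace Ω} {ε : ℝ}
  {p Q : ℕ → Ω → ℝ}

theorem subset_B (h : CoreSetup P k B 𝒲 ε p Q) {i j : ℕ} (hij : i ≤ j) (hjk : j ≤ k) :
    B j ⊆ B i :=
  h.antitoneOn_B (Set.mem_Iic.2 (hij.trans hjk)) (Set.mem_Iic.2 hjk) hij

theorem ae_cond_ne_zero (h : CoreSetup P k B 𝒲 ε p Q) {π : Ω → ℝ} {n : ℕ} (hn : n + 1 ≤ k)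
    (hπ : π =ᵐ[P[|B n]] p (n + 1)) : ∀ᵐ ω ∂P[|B n], π ω ≠ 0 := by
  filter_upwards [hπ, cond_absolutelyContinuous.ae_le (h.le_p (n + 1) (by omega) hn)]
    with ω hπω hpω
  exact hπω ▸ (h.pos.trans_le hpω).ne'

theorem integrableOn_inv_cumProd_mul (h : CoreSetup P k B 𝒲 ε p Q) {π : ℕ → Ω → ℝ}
    (hπm : ∀ m, 1 ≤ m → m ≤ k → Measurable[𝒲 m] (π m))
    (hπ : ∀ m, 1 ≤ m → m ≤ k → ∀ᵐ ω ∂P, ε ≤ π m ω) {n : ℕ} (hn : 1 ≤ n) (hnk : n ≤ k)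
    {V : Ω → ℝ} {s : Set Ω} (hV : IntegrableOn V s P) :
    IntegrableOn (fun ω => (cumProd π n ω)⁻¹ * V ω) s P :=
  hV.bdd_mul (((measurable_cumProd h.monotoneOn_W hπm le_rfl hn hnk).mono
      (h.W_le n hn hnk) le_rfl).inv.aestronglyMeasurable)
    (ae_restrict_of_ae (ae_norm_inv_cumProd_le h.pos fun s hs hsn => hπ s hs (hsn.trans hnk)))

variable [IsFiniteMeasure P]

theorem integrableOn_Q (h : CoreSetup P k B 𝒲 ε p Q) {n : ℕ} (hn : n ≤ k) :
    IntegrableOn (Q (n + 1)) (B n) P := by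
  rcases hn.eq_or_lt with rfl | hn
  · exact h.integrable_Q_top.integrableOn
  have hQ : IntegrableOn (Q (n + 1)) (B (n + 1)) P :=
    integrable_cond_iff_integrableOn.1
      (integrable_condExp.congr (h.Q_ae_eq_condExp (n + 1) (by omega) hn).symm)
  have hp : p (n + 1) =ᵐ[P[|B n]]
      (P[|B n])[(B (n + 1)).indicator (fun _ => (1 : ℝ))|𝒲 (n + 1)] := by
    simpa using h.p_ae_eq_condExp (n + 1) (by omega) hn
  refine (setIntegral_div_eq_of_ae_eq_condExp_indicator (h.W_le (n + 1) (by omega) hn)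
    (h.measurableSet_B (n + 1) hn) (h.subset_B (Nat.le_succ n) hn)
    (h.measurable_Q (n + 1) (by omega) hn) (h.measurable_p (n + 1) (by omega) hn) hp
    (h.ae_cond_ne_zero hn Filter.EventuallyEq.rfl) ?_).2
  simp only [div_eq_inv_mul]
  exact hQ.bdd_mul
    ((h.measurable_p (n + 1) (by omega) hn).mono (h.W_le (n + 1) (by omega) hn)
      le_rfl).inv.aestronglyMeasurable
    (ae_restrict_of_ae (ae_norm_inv_le_of_le h.pos (h.le_p (n + 1) (by omega) hn)))

theorem setIntegral_inv_cumProd_mul_Q_succ (h : CoreSetup P k B 𝒲 ε p Q) {π : ℕ → Ω → ℝ}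
    (hπm : ∀ m, 1 ≤ m → m ≤ k → Measurable[𝒲 m] (π m))
    (hπ : ∀ m, 1 ≤ m → m ≤ k → ∀ᵐ ω ∂P, ε ≤ π m ω) {m : ℕ} (hm : 1 ≤ m) (hmk : m ≤ k) :
    ∫ ω in B m, (cumProd π m ω)⁻¹ * Q (m + 1) ω ∂P
      = ∫ ω in B m, (cumProd π m ω)⁻¹ * Q m ω ∂P :=
  setIntegral_mul_eq_of_ae_eq_condExp_cond (h.W_le m hm hmk)
    (measurable_cumProd h.monotoneOn_W hπm le_rfl hm hmk).inv (h.integrableOn_Q hmk)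
    (h.integrableOn_inv_cumProd_mul hπm hπ hm hmk (h.integrableOn_Q hmk))
    (h.Q_ae_eq_condExp m hm hmk)

theorem setIntegral_inv_cumProd_succ_mul (h : CoreSetup P k B 𝒲 ε p Q) {π : ℕ → Ω → ℝ}
    (hπm : ∀ m, 1 ≤ m → m ≤ k → Measurable[𝒲 m] (π m)) {n : ℕ} (hn : n + 1 ≤ k)
    (hπ : π (n + 1) =ᵐ[P[|B n]] p (n + 1)) {V : Ω → ℝ} (hVm : Measurable[𝒲 (n + 1)] V)
    (hint : IntegrableOn (fun ω => (cumProd π (n + 1) ω)⁻¹ * V ω) (B (n + 1)) P) :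
    ∫ ω in B (n + 1), (cumProd π (n + 1) ω)⁻¹ * V ω ∂P
      = ∫ ω in B n, (cumProd π n ω)⁻¹ * V ω ∂P := by
  have hsplit : (fun ω => (cumProd π (n + 1) ω)⁻¹ * V ω)
      = fun ω => (cumProd π n ω)⁻¹ * V ω / π (n + 1) ω := by
    ext ω; rw [cumProd_succ, mul_inv]; ring
  have hp : p (n + 1) =ᵐ[P[|B n]]
      (P[|B n])[(B (n + 1)).indicator (fun _ => (1 : ℝ))|𝒲 (n + 1)] := by
    simpa using h.p_ae_eq_condExp (n + 1) (by omega) hn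
  rw [hsplit] at hint ⊢
  exact (setIntegral_div_eq_of_ae_eq_condExp_indicator (h.W_le (n + 1) (by omega) hn)
    (h.measurableSet_B (n + 1) hn) (h.subset_B (Nat.le_succ n) hn)
    ((measurable_cumProd h.monotoneOn_W hπm (Nat.le_succ n) (by omega) hn).inv.mul hVm)
    (hπm (n + 1) (by omega) hn) (hπ.trans hp) (h.ae_cond_ne_zero hn hπ) hint).1

theorem setIntegral_inv_cumProd_mul_Q_eq_integral (h : CoreSetup P k B 𝒲 ε p Q) {n : ℕ}
    (hn : n ≤ k) : ∫ ω in B n, (cumProd p n ω)⁻¹ * Q (n + 1) ω ∂P = ∫ ω, Q 1 ω ∂P := by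
  induction n with
  | zero => simp [Measure.restrict_eq_self_of_ae_mem h.ae_mem_B_zero]
  | succ n ih =>
    have hQ : IntegrableOn (Q (n + 1)) (B (n + 1)) P :=
      (h.integrableOn_Q (by omega : n ≤ k)).mono_set (h.subset_B (Nat.le_succ n) hn)
    calc ∫ ω in B (n + 1), (cumProd p (n + 1) ω)⁻¹ * Q (n + 1 + 1) ω ∂P
        = ∫ ω in B (n + 1), (cumProd p (n + 1) ω)⁻¹ * Q (n + 1) ω ∂P :=
          h.setIntegral_inv_cumProd_mul_Q_succ h.measurable_p h.le_p (by omega) hn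
      _ = ∫ ω in B n, (cumProd p n ω)⁻¹ * Q (n + 1) ω ∂P :=
          h.setIntegral_inv_cumProd_succ_mul h.measurable_p hn Filter.EventuallyEq.rfl
            (h.measurable_Q (n + 1) (by omega) hn)
            (h.integrableOn_inv_cumProd_mul h.measurable_p h.le_p (by omega) hn hQ)
      _ = ∫ ω, Q 1 ω ∂P := ih (by omega)

end CoreSetup

end Setup

section Candidate

variable {Ω : Type*} [mΩ : MeasurableSpace Ω] {P : Measure Ω} {k m₀ : ℕ} {B : ℕ → Set Ω}
  {𝒲 : ℕ → MeasurableSpace Ω} {ε : ℝ} {p Q phat Qhat : ℕ → Ω → ℝ}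

theorem Qhat_ae_eq_Q (htop : Qhat (k + 1) = Q (k + 1))
    (hQcorrect : ∀ m, m₀ < m → m ≤ k → Qhat m =ᵐ[P[|B (m - 1)]] Q m) {n : ℕ}
    (hn : m₀ ≤ n) (hnk : n ≤ k) : Qhat (n + 1) =ᵐ[P[|B n]] Q (n + 1) := by
  rcases hnk.eq_or_lt with rfl | hnk
  · rw [htop]
  · simpa using hQcorrect (n + 1) (by omega) hnk

variable [IsFiniteMeasure P]

theorem CandidateSetup.integrable_Qhat (hcand : CandidateSetup P k 𝒲 ε phat Qhat)
    (hcore : CoreSetup P k B 𝒲 ε p Q) (htop : Qhat (k + 1) = Q (k + 1)) {m : ℕ} (hm : 1 ≤ m)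
    (hmk : m ≤ k + 1) : Integrable (Qhat m) P := by
  rcases (show m ≤ k ∨ m = k + 1 by omega) with hmk | rfl
  · obtain ⟨C, hC⟩ := hcand.bounded_Qhat m hm hmk
    exact (integrable_const C).mono'
      ((hcand.measurable_Qhat m hm hmk).mono (hcore.W_le m hm hmk) le_rfl).aestronglyMeasurable
      (ae_of_all _ fun ω => (Real.norm_eq_abs _).trans_le (hC ω))
  · exact htop ▸ hcore.integrable_Q_top

theorem CoreSetup.setIntegral_inv_cumProd_mul_Qhat_succ (hcore : CoreSetup P k B 𝒲 ε p Q)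
    (hcand : CandidateSetup P k 𝒲 ε phat Qhat) (htop : Qhat (k + 1) = Q (k + 1))
    (hQcorrect : ∀ m, m₀ < m → m ≤ k → Qhat m =ᵐ[P[|B (m - 1)]] Q m) {n : ℕ}
    (hn : m₀ ≤ n) (hnk : n + 1 ≤ k) :
    ∫ ω in B (n + 1), (cumProd phat (n + 1) ω)⁻¹ * Qhat (n + 1 + 1) ω ∂P
      = ∫ ω in B (n + 1), (cumProd phat (n + 1) ω)⁻¹ * Qhat (n + 1) ω ∂P := by
  have hQ_succ := Qhat_ae_eq_Q htop hQcorrect (by omega : m₀ ≤ n + 1) hnk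
  have hQ : Qhat (n + 1) =ᵐ[P[|B (n + 1)]] Q (n + 1) :=
    (cond_absolutelyContinuous_cond_of_subset (hcore.subset_B (Nat.le_succ n) hnk)).ae_le
    (Qhat_ae_eq_Q htop hQcorrect hn (by omega))
  calc ∫ ω in B (n + 1), (cumProd phat (n + 1) ω)⁻¹ * Qhat (n + 1 + 1) ω ∂P
      = ∫ ω in B (n + 1), (cumProd phat (n + 1) ω)⁻¹ * Q (n + 1 + 1) ω ∂P :=
        setIntegral_congr_of_ae_cond (hQ_succ.mono fun ω hω => by simp only [hω])
    _ = ∫ ω in B (n + 1), (cumProd phat (n + 1) ω)⁻¹ * Q (n + 1) ω ∂P :=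
        hcore.setIntegral_inv_cumProd_mul_Q_succ hcand.measurable_phat hcand.le_phat
          (by omega) hnk
    _ = ∫ ω in B (n + 1), (cumProd phat (n + 1) ω)⁻¹ * Qhat (n + 1) ω ∂P :=
        setIntegral_congr_of_ae_cond (hQ.mono fun ω hω => by simp only [hω])

theorem CoreSetup.integral_oneStep_eq_setIntegral (hcore : CoreSetup P k B 𝒲 ε p Q)
    (hcand : CandidateSetup P k 𝒲 ε phat Qhat) (htop : Qhat (k + 1) = Q (k + 1))
    (hm₀ : m₀ ≤ k) (hpcorrect : ∀ m, 1 ≤ m → m ≤ m₀ → phat m =ᵐ[P[|B (m - 1)]] p m)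
    (hQcorrect : ∀ m, m₀ < m → m ≤ k → Qhat m =ᵐ[P[|B (m - 1)]] Q m) :
    ∫ ω, (∑ m ∈ Icc 1 k,
        (B m).indicator (fun ω' => (cumProd phat m ω')⁻¹ * (Qhat (m + 1) ω' - Qhat m ω')) ω
      + Qhat 1 ω) ∂P = ∫ ω in B m₀, (cumProd phat m₀ ω)⁻¹ * Qhat (m₀ + 1) ω ∂P := by
  have hint : ∀ m j, 1 ≤ m → m ≤ k → 1 ≤ j → j ≤ k + 1 →
      IntegrableOn (fun ω => (cumProd phat m ω)⁻¹ * Qhat j ω) (B m) P :=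
    fun m j hm hmk hj hjk => hcore.integrableOn_inv_cumProd_mul hcand.measurable_phat
      hcand.le_phat hm hmk (hcand.integrable_Qhat hcore htop hj hjk).integrableOn
  have hQhat_one :
      ∫ ω, Qhat 1 ω ∂P = ∫ ω in B 0, (cumProd phat 0 ω)⁻¹ * Qhat (0 + 1) ω ∂P := by
    simp [Measure.restrict_eq_self_of_ae_mem hcore.ae_mem_B_zero]
  refine (integral_sum_indicator_mul_sub_add_eq (w := fun m ω => (cumProd phat m ω)⁻¹)
    (fun m hm => hcore.measurableSet_B m (mem_Icc.1 hm).2)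
    (fun m hm => by
      obtain ⟨hm, hmk⟩ := mem_Icc.1 hm
      exact ⟨hint m (m + 1) hm hmk (by omega) (by omega), hint m m hm hmk hm (by omega)⟩)
    (hcand.integrable_Qhat hcore htop le_rfl (by omega))).trans ?_
  rw [hQhat_one]
  exact sum_Icc_sub_add_eq_of_telescope hm₀
    (fun n hn => hcore.setIntegral_inv_cumProd_succ_mul hcand.measurable_phat (by omega)
      (by simpa using hpcorrect (n + 1) (by omega) hn)
      (hcand.measurable_Qhat (n + 1) (by omega) (by omega))
      (hint (n + 1) (n + 1) (by omega) (by omega) (by omega) (by omega)))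
    (fun n hn hnk => hcore.setIntegral_inv_cumProd_mul_Qhat_succ hcand htop hQcorrect hn hnk)

theorem CoreSetup.setIntegral_inv_cumProd_mul_Qhat_eq_Q (hcore : CoreSetup P k B 𝒲 ε p Q)
    (htop : Qhat (k + 1) = Q (k + 1)) (hm₀ : m₀ ≤ k)
    (hpcorrect : ∀ m, 1 ≤ m → m ≤ m₀ → phat m =ᵐ[P[|B (m - 1)]] p m)
    (hQcorrect : ∀ m, m₀ < m → m ≤ k → Qhat m =ᵐ[P[|B (m - 1)]] Q m) :
    ∫ ω in B m₀, (cumProd phat m₀ ω)⁻¹ * Qhat (m₀ + 1) ω ∂P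
      = ∫ ω in B m₀, (cumProd p m₀ ω)⁻¹ * Q (m₀ + 1) ω ∂P := by
  have hphat : ∀ᵐ ω ∂P[|B m₀], ∀ s ∈ Icc 1 m₀, phat s ω = p s ω :=
    (Filter.eventually_all_finset _).2 fun s hs => by
      obtain ⟨hs, hsm₀⟩ := mem_Icc.1 hs
      exact (cond_absolutelyContinuous_cond_of_subset (hcore.subset_B (by omega) hm₀)).ae_le
        (hpcorrect s hs hsm₀)
  refine setIntegral_congr_of_ae_cond ?_
  filter_upwards [hphat, Qhat_ae_eq_Q htop hQcorrect le_rfl hm₀] with ω hpω hQω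
  rw [hQω, cumProd, cumProd, prod_congr rfl hpω]

end Candidate

theorem multiple_robustness_general
    {Ω : Type*} [inst : MeasurableSpace Ω] (P : Measure Ω) [IsProbabilityMeasure P]
    (k : ℕ)
    (B : ℕ → Set Ω)
    (hBmeas : ∀ m, m ≤ k → MeasurableSet (B m))
    (hBmono : ∀ m, m < k → B (m + 1) ⊆ B m)
    (hB0 : P (B 0) = 1)
    (𝒲 : ℕ → MeasurableSpace Ω)
    (h𝒲le : ∀ m, 1 ≤ m → m ≤ k → 𝒲 m ≤ inst)
    (h𝒲mono : ∀ m, 1 ≤ m → m < k → 𝒲 m ≤ 𝒲 (m + 1))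
    (ε : ℝ) (hε : 0 < ε)
    (p : ℕ → Ω → ℝ)
    (hpmeas : ∀ m, 1 ≤ m → m ≤ k → Measurable[𝒲 m] (p m))
    (hpver : ∀ m, 1 ≤ m → m ≤ k →
      p m =ᵐ[P[|B (m - 1)]] (P[|B (m - 1)])[(B m).indicator (fun _ => (1 : ℝ))|𝒲 m])
    (hppos : ∀ m, 1 ≤ m → m ≤ k → ∀ᵐ ω ∂P, ε ≤ p m ω)
    (g : ℕ → Ω → ℝ)
    (hg : ∀ m ω, g m ω = ∏ s ∈ Finset.Icc 1 m, p s ω)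
    (Y : Ω → ℝ) (hYint : Integrable Y P)
    (Q : ℕ → Ω → ℝ)
    (hQtop : Q (k + 1) = Y)
    (hQmeas : ∀ m, 1 ≤ m → m ≤ k → Measurable[𝒲 m] (Q m))
    (hQver : ∀ m, 1 ≤ m → m ≤ k → Q m =ᵐ[P[|B m]] (P[|B m])[Q (m + 1)|𝒲 m])
    (phat : ℕ → Ω → ℝ)
    (hphatmeas : ∀ m, 1 ≤ m → m ≤ k → Measurable[𝒲 m] (phat m))
    (hphatbd : ∀ m, 1 ≤ m → m ≤ k → ∀ᵐ ω ∂P, ε ≤ phat m ω ∧ phat m ω ≤ 1)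
    (ghat : ℕ → Ω → ℝ)
    (hghat : ∀ m ω, ghat m ω = ∏ s ∈ Finset.Icc 1 m, phat s ω)
    (Qhat : ℕ → Ω → ℝ)
    (hQhattop : Qhat (k + 1) = Y)
    (hQhatmeas : ∀ m, 1 ≤ m → m ≤ k → Measurable[𝒲 m] (Qhat m))
    (hQhatbd : ∀ m, 1 ≤ m → m ≤ k → ∃ C, ∀ ω, |Qhat m ω| ≤ C)
    (m₀ : ℕ) (hm₀ : m₀ ≤ k)
    (hpcorrect : ∀ m, 1 ≤ m → m ≤ m₀ → phat m =ᵐ[P[|B (m - 1)]] p m)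
    (hQcorrect : ∀ m, m₀ < m → m ≤ k → Qhat m =ᵐ[P[|B (m - 1)]] Q m) :
    ∫ ω, ((∑ m ∈ Finset.Icc 1 k,
        (B m).indicator (fun ω' => (ghat m ω')⁻¹ * (Qhat (m + 1) ω' - Qhat m ω')) ω)
      + Qhat 1 ω) ∂P = ∫ ω, Q 1 ω ∂P := by
  obtain rfl : g = cumProd p := funext fun m => funext (hg m)
  obtain rfl : ghat = cumProd phat := funext fun m => funext (hghat m)
  have hcore : CoreSetup P k B 𝒲 ε p Q :=
    ⟨hBmeas, antitoneOn_Iic_of_succ_le hBmono,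
      (mem_ae_iff_prob_eq_one (hBmeas 0 (Nat.zero_le k))).2 hB0, h𝒲le,
      monotoneOn_Icc_of_le_succ h𝒲mono, hε, hpmeas, hpver, hppos, hQmeas, hQver, hQtop ▸ hYint⟩
  have hcand : CandidateSetup P k 𝒲 ε phat Qhat :=
    ⟨hphatmeas, fun m hm hmk => (hphatbd m hm hmk).mono fun _ h => h.1, hQhatmeas, hQhatbd⟩
  have htop : Qhat (k + 1) = Q (k + 1) := hQhattop.trans hQtop.symm
  rw [hcore.integral_oneStep_eq_setIntegral hcand htop hm₀ hpcorrect hQcorrect,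
    hcore.setIntegral_inv_cumProd_mul_Qhat_eq_Q htop hm₀ hpcorrect hQcorrect,
    hcore.setIntegral_inv_cumProd_mul_Q_eq_integral hm₀]

/-- Multiple robustness of the one-step functional (the "k+1 chances of
consistency" property): under the core setup, the true recursion `Q`
(`φ_{j,k} = E_P[Q 1]`), and the candidate-nuisance setup, if there is `m₀ ∈ {0,…,k}`
such that the candidate propensities are correct (`phat m = p m` a.s. under
`P[|B (m-1)]`) for all `1 ≤ m ≤ m₀` and the candidate outcome regressions are correct
(`Qhat m = Q m` a.s. under `P[|B (m-1)]`) for all `m₀ < m ≤ k`, then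
`E_P[φ̃] = φ_{j,k}` where
`φ̃ = Σ_{m=1}^k 1_{B m} (ghat m)⁻¹ (Qhat (m+1) - Qhat m) + Qhat 1`. -/
theorem multiple_robustness
    {Ω : Type*} [inst : MeasurableSpace Ω] (P : Measure Ω) [IsProbabilityMeasure P]
    (k : ℕ) (hk : 1 ≤ k)
    (B : ℕ → Set Ω)
    (hBmeas : ∀ m, m ≤ k → MeasurableSet (B m))
    (hBmono : ∀ m, m < k → B (m + 1) ⊆ B m)
    (hB0 : P (B 0) = 1)
    (hBk : 0 < P (B k))
    (𝒲 : ℕ → MeasurableSpace Ω)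
    (h𝒲le : ∀ m, 1 ≤ m → m ≤ k → 𝒲 m ≤ inst)
    (h𝒲mono : ∀ m, 1 ≤ m → m < k → 𝒲 m ≤ 𝒲 (m + 1))
    (ε : ℝ) (hε : 0 < ε)
    (p : ℕ → Ω → ℝ)
    (hpmeas : ∀ m, 1 ≤ m → m ≤ k → Measurable[𝒲 m] (p m))
    (hpver : ∀ m, 1 ≤ m → m ≤ k →
      p m =ᵐ[P[|B (m - 1)]] (P[|B (m - 1)])[(B m).indicator (fun _ => (1 : ℝ))|𝒲 m])
    (hppos : ∀ m, 1 ≤ m → m ≤ k → ∀ᵐ ω ∂P, ε ≤ p m ω)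
    (g : ℕ → Ω → ℝ)
    (hg : ∀ m ω, g m ω = ∏ s ∈ Finset.Icc 1 m, p s ω)
    (Y : Ω → ℝ) (hYint : Integrable Y P)
    (Q : ℕ → Ω → ℝ)
    (hQtop : Q (k + 1) = Y)
    (hQmeas : ∀ m, 1 ≤ m → m ≤ k → Measurable[𝒲 m] (Q m))
    (hQver : ∀ m, 1 ≤ m → m ≤ k → Q m =ᵐ[P[|B m]] (P[|B m])[Q (m + 1)|𝒲 m])
    (phat : ℕ → Ω → ℝ)
    (hphatmeas : ∀ m, 1 ≤ m → m ≤ k → Measurable[𝒲 m] (phat m))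
    (hphatbd : ∀ m, 1 ≤ m → m ≤ k → ∀ᵐ ω ∂P, ε ≤ phat m ω ∧ phat m ω ≤ 1)
    (ghat : ℕ → Ω → ℝ)
    (hghat : ∀ m ω, ghat m ω = ∏ s ∈ Finset.Icc 1 m, phat s ω)
    (Qhat : ℕ → Ω → ℝ)
    (hQhattop : Qhat (k + 1) = Y)
    (hQhatmeas : ∀ m, 1 ≤ m → m ≤ k → Measurable[𝒲 m] (Qhat m))
    (hQhatbd : ∀ m, 1 ≤ m → m ≤ k → ∃ C, ∀ ω, |Qhat m ω| ≤ C)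
    (m₀ : ℕ) (hm₀ : m₀ ≤ k)
    (hpcorrect : ∀ m, 1 ≤ m → m ≤ m₀ → phat m =ᵐ[P[|B (m - 1)]] p m)
    (hQcorrect : ∀ m, m₀ < m → m ≤ k → Qhat m =ᵐ[P[|B (m - 1)]] Q m) :
    ∫ ω, ((∑ m ∈ Finset.Icc 1 k,
        (B m).indicator (fun ω' => (ghat m ω')⁻¹ * (Qhat (m + 1) ω' - Qhat m ω')) ω)
      + Qhat 1 ω) ∂P = ∫ ω, Q 1 ω ∂P :=
  multiple_robustness_general (inst := inst) P k B hBmeas hBmono hB0 𝒲 h𝒲le h𝒲mono ε hε p hpmeas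
    hpver hppos g hg Y hYint Q hQtop hQmeas hQver phat hphatmeas hphatbd ghat hghat Qhat hQhattop
    hQhatmeas hQhatbd m₀ hm₀ hpcorrect hQcorrect
end

section
/- Parallel trends holds under additive unmeasured confounding in a structural equation model with treatment-covariate feedback (the claim verified for the paper's simulation design): Let (Ω, 𝓕, P) be a probability space carrying mutually independent random elements U, (δ_t)_{t=0}^τ, (η_t)_{t=0}^τ, (ε_t)_{t=0}^τ, where each ε_t is integrable with E[ε_t] = 0 and δ_t, η_t take values in standard Borel spaces. Fix a countable treatment space 𝒜, a target regime (a*₀,…,a*_τ) ∈ 𝒜^{τ+1}, and measurable functions f_t, a_t, b_t with each b_t bounded. Define recursively the observed process: W₀ = f₀(δ₀); for t ≥ 1, W_t = f_t(W̄_{t−1}, A_{t−1}, δ_t); A_t = a_t(W̄_t, Ā_{t−1}, U, η_t); Y_t = b_t(W̄_t, A_t) + U + ε_t; and the counterfactual process: W₀* = W₀; W_t* = f_t(W̄*_{t−1}, a*_{t−1}, δ_t); Y_t* = b_t(W̄*_t, a*_t) + U + ε_t. Let B_m = {A₀ = a*₀, …, A_m = a*_m} and 𝒲_k = σ(W₀,…,W_k).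 Then for every t ∈ {1,…,τ} and every k ∈ {0,…,t−1} with P(B_k) > 0, there exists a 𝒲_k-measurable random variable h that is simultaneously a version of the conditional expectation of Y_t* − Y_{t−1}* given 𝒲_k under P(·|B_{k−1}) and a version of the conditional expectation of Y_t* − Y_{t−1}* given 𝒲_k under P(·|B_k) (where B_{−1} := Ω); that is, the conditional parallel trends assumption holds for the regime ā* even though U confounds treatment and outcome and covariates are affected by prior treatment. -/
/-!
The confounder `U` enters every outcome additively, so it cancels in
`Z = Y*_t - Y*_{t-1} = G + (ε_t - ε_{t-1})`, where `G` is a function of the counterfactual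
covariates and hence of the shocks `δ` alone; the noise `ε` is independent of `σ(δ, U, η)` and
drops out of every conditional expectation. Let `ψ` be measurable with
`ψ(W̄*_k) = E[G | W̄*_k]`. Because `σ(δ)` is independent of `σ(U, η)`, conditioning `G`
further on `U, η` changes nothing, so `∫_S Z = ∫_S ψ(W̄*_k)` for every `S` in
`σ(W̄*_k) ∨ σ(U, η)`. Now if `m ≤ k ≤ m + 1`, then on `B_m` the observed history `W̄_k` equals
`W̄*_k`, and `B_m` is decided by `W̄*_k, U, η`. Hence `ψ(W̄_k)` is a version of `E[Z | W̄_k]`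
under `P(· | B_m)` for `m = k - 1` and `m = k`, and under `P` when `k = 0`, with the same `ψ`.
-/

open MeasureTheory ProbabilityTheory

namespace MeasureTheory

variable {Ω : Type*} {mΩ : MeasurableSpace Ω} {μ : Measure Ω}

theorem _root_.IsPiSystem.image2_inter {S T : Set (Set Ω)} (hS : IsPiSystem S) (hT : IsPiSystem T) :
    IsPiSystem (Set.image2 (· ∩ ·) S T) := by
  rintro _ ⟨s₁, hs₁, s₂, hs₂, rfl⟩ _ ⟨t₁, ht₁, t₂, ht₂, rfl⟩ ⟨ω, hω⟩
  refine ⟨s₁ ∩ t₁, hS _ hs₁ _ ht₁ ⟨ω, hω.1.1, hω.2.1⟩, s₂ ∩ t₂,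
    hT _ hs₂ _ ht₂ ⟨ω, hω.1.2, hω.2.2⟩, ?_⟩
  simp only [Set.inter_inter_inter_comm]

theorem _root_.MeasurableSpace.sup_eq_generateFrom_image2_inter (m₁ m₂ : MeasurableSpace Ω) :
    m₁ ⊔ m₂ = MeasurableSpace.generateFrom
      (Set.image2 (· ∩ ·) {s | MeasurableSet[m₁] s} {s | MeasurableSet[m₂] s}) := by
  refine le_antisymm (sup_le (fun s hs => ?_) (fun s hs => ?_))
    (MeasurableSpace.generateFrom_le ?_)
  · exact MeasurableSpace.measurableSet_generateFrom ⟨s, hs, Set.univ, .univ, Set.inter_univ s⟩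
  · exact MeasurableSpace.measurableSet_generateFrom ⟨Set.univ, .univ, s, hs, Set.univ_inter s⟩
  · rintro _ ⟨s, hs, t, ht, rfl⟩
    exact (le_sup_left (b := m₂) s hs).inter (le_sup_right (a := m₁) t ht)

theorem setIntegral_eq_zero_of_indep [IsFiniteMeasure μ] {m₁ m₂ : MeasurableSpace Ω}
    (hm₁ : m₁ ≤ mΩ) (hm₂ : m₂ ≤ mΩ) (hind : Indep m₁ m₂ μ) {g : Ω → ℝ}
    (hg : StronglyMeasurable[m₁] g) (hgi : Integrable g μ) (hg0 : ∫ ω, g ω ∂μ = 0)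
    {s : Set Ω} (hs : MeasurableSet[m₂] s) : ∫ ω in s, g ω ∂μ = 0 := by
  rw [← setIntegral_condExp hm₂ hgi hs,
    setIntegral_congr_ae (hm₂ s hs) ((condExp_indep_eq hm₁ hm₂ hg hind).mono fun _ h _ => h)]
  simp [hg0]

theorem setIntegral_eq_zero_of_indep_sup [IsFiniteMeasure μ] {m₁ m₂ mH : MeasurableSpace Ω}
    (hm₂ : m₂ ≤ mΩ) (hmH : mH ≤ mΩ) (h₁₂ : m₁ ≤ m₂) (hind : Indep m₂ mH μ) {g : Ω → ℝ}
    (hg : StronglyMeasurable[m₂] g) (hgi : Integrable g μ)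
    (hg0 : ∀ s, MeasurableSet[m₁] s → ∫ ω in s, g ω ∂μ = 0)
    {s : Set Ω} (hs : MeasurableSet[m₁ ⊔ mH] s) : ∫ ω in s, g ω ∂μ = 0 := by
  have hle : m₁ ⊔ mH ≤ mΩ := sup_le (h₁₂.trans hm₂) hmH
  induction s, hs using MeasurableSpace.induction_on_inter
      (MeasurableSpace.sup_eq_generateFrom_image2_inter m₁ mH)
      ((@MeasurableSpace.isPiSystem_measurableSet Ω m₁).image2_inter
        (@MeasurableSpace.isPiSystem_measurableSet Ω mH)) with
  | empty => simp
  | basic _ hs =>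
    obtain ⟨s₁, hs₁, s₂, hs₂, rfl⟩ := hs
    have hs₁Ω : MeasurableSet[mΩ] s₁ := h₁₂.trans hm₂ s₁ hs₁
    change ∫ ω in s₁ ∩ s₂, g ω ∂μ = 0
    rw [Set.inter_comm, ← setIntegral_indicator hs₁Ω]
    refine setIntegral_eq_zero_of_indep hm₂ hmH hind (hg.indicator (h₁₂ s₁ hs₁))
      (hgi.indicator hs₁Ω) ?_ hs₂
    rw [integral_indicator hs₁Ω, hg0 s₁ hs₁]
  | compl t ht iht =>
    rw [setIntegral_compl (hle t ht) hgi, iht, ← setIntegral_univ, hg0 _ .univ, sub_zero]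
  | iUnion t hdisj ht iht =>
    rw [integral_iUnion (fun i => hle _ (ht i)) hdisj hgi.integrableOn]
    simp [iht]

theorem setIntegral_condExp_of_indep_sup [IsFiniteMeasure μ] {m₁ m₂ mH : MeasurableSpace Ω}
    (hm₂ : m₂ ≤ mΩ) (hmH : mH ≤ mΩ) (h₁₂ : m₁ ≤ m₂) (hind : Indep m₂ mH μ) {g : Ω → ℝ}
    (hg : StronglyMeasurable[m₂] g) (hgi : Integrable g μ)
    {s : Set Ω} (hs : MeasurableSet[m₁ ⊔ mH] s) : ∫ ω in s, μ[g|m₁] ω ∂μ = ∫ ω in s, g ω ∂μ := by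
  have hm₁ : m₁ ≤ mΩ := h₁₂.trans hm₂
  have hzero : ∫ ω in s, (μ[g|m₁] ω - g ω) ∂μ = 0 :=
    setIntegral_eq_zero_of_indep_sup (g := fun ω => μ[g|m₁] ω - g ω) hm₂ hmH h₁₂ hind
    ((stronglyMeasurable_condExp.mono h₁₂).sub hg) (integrable_condExp.sub hgi)
    (fun s hs => by
      rw [integral_sub integrable_condExp.integrableOn hgi.integrableOn,
        setIntegral_condExp hm₁ hgi hs, sub_self]) hs
  rwa [integral_sub integrable_condExp.integrableOn hgi.integrableOn, sub_eq_zero] at hzero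

theorem setIntegral_cond {B S : Set Ω} (hS : MeasurableSet S) (f : Ω → ℝ) :
    ∫ ω in S, f ω ∂μ[|B] = (μ B)⁻¹.toReal * ∫ ω in S ∩ B, f ω ∂μ := by
  rw [ProbabilityTheory.cond, Measure.restrict_smul, Measure.restrict_restrict hS,
    integral_smul_measure, smul_eq_mul]

theorem ae_eq_condExp_cond_of_forall_setIntegral_inter_eq [IsFiniteMeasure μ]
    {m : MeasurableSpace Ω} (hm : m ≤ mΩ) {B : Set Ω} (hμB : μ B ≠ 0) {f Z : Ω → ℝ}
    (hf : StronglyMeasurable[m] f) (hfi : IntegrableOn f B μ) (hZi : IntegrableOn Z B μ)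
    (h : ∀ S, MeasurableSet[m] S → ∫ ω in S ∩ B, f ω ∂μ = ∫ ω in S ∩ B, Z ω ∂μ) :
    f =ᵐ[μ[|B]] μ[|B][Z|m] := by
  have hinv : (μ B)⁻¹ ≠ ⊤ := ENNReal.inv_ne_top.2 hμB
  refine ae_eq_condExp_of_forall_setIntegral_eq hm (hZi.smul_measure hinv)
    (fun _ _ _ => (hfi.smul_measure hinv).integrableOn) (fun S hS _ => ?_)
    hf.aestronglyMeasurable
  rw [setIntegral_cond (hm S hS), setIntegral_cond (hm S hS), h S hS]

theorem exists_measurable_comp_ae_eq_condExp_cond [IsFiniteMeasure μ] {β : Type*}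
    [mβ : MeasurableSpace β] {mδ mH : MeasurableSpace Ω} (hmδ : mδ ≤ mΩ) (hmH : mH ≤ mΩ)
    (hind : Indep mδ mH μ) {Xs : Ω → β} (hXs : Measurable[mδ] Xs) {G Z : Ω → ℝ}
    (hG : StronglyMeasurable[mδ] G) (hGi : Integrable G μ) (hZi : Integrable Z μ)
    (hZG : ∀ S, MeasurableSet[mδ ⊔ mH] S → ∫ ω in S, Z ω ∂μ = ∫ ω in S, G ω ∂μ) :
    ∃ ψ : β → ℝ, Measurable ψ ∧ ∀ (X : Ω → β) (B : Set Ω), Measurable[mΩ] X →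
      MeasurableSet[mβ.comap Xs ⊔ mH] B → μ B ≠ 0 → Set.EqOn X Xs B →
      ψ ∘ X =ᵐ[μ[|B]] μ[|B][Z|mβ.comap X] := by
  set m₁ := mβ.comap Xs
  have h₁δ : m₁ ≤ mδ := hXs.comap_le
  obtain ⟨ψ, hψ, hψF⟩ :=
    (stronglyMeasurable_condExp (m := m₁) (μ := μ) (f := G)).exists_eq_measurable_comp
  refine ⟨ψ, hψ.measurable, fun X B hX hB hμB hXB => ?_⟩
  have hBΩ : MeasurableSet[mΩ] B := sup_le (h₁δ.trans hmδ) hmH B hB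
  have hψB : Set.EqOn (ψ ∘ X) (μ[G|m₁]) B := fun ω hω => by
    rw [hψF, Function.comp_apply, Function.comp_apply, hXB hω]
  refine ae_eq_condExp_cond_of_forall_setIntegral_inter_eq hX.comap_le hμB
    (hψ.comp_measurable (comap_measurable X))
    (integrable_condExp.integrableOn.congr_fun hψB.symm hBΩ) hZi.integrableOn ?_
  rintro _ ⟨T, hT, rfl⟩
  have hSB : X ⁻¹' T ∩ B = Xs ⁻¹' T ∩ B := by
    rw [Set.inter_comm, hXB.inter_preimage_eq, Set.inter_comm]
  have hSBm : MeasurableSet[m₁ ⊔ mH] (Xs ⁻¹' T ∩ B) :=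
    (le_sup_left (a := m₁) (b := mH) _ (comap_measurable Xs hT)).inter hB
  calc ∫ ω in X ⁻¹' T ∩ B, (ψ ∘ X) ω ∂μ = ∫ ω in Xs ⁻¹' T ∩ B, μ[G|m₁] ω ∂μ := by
        rw [hSB]
        exact setIntegral_congr_fun (sup_le (h₁δ.trans hmδ) hmH _ hSBm)
          (hψB.mono Set.inter_subset_right)
    _ = ∫ ω in Xs ⁻¹' T ∩ B, G ω ∂μ :=
        setIntegral_condExp_of_indep_sup hmδ hmH h₁δ hind hG hGi hSBm
    _ = ∫ ω in X ⁻¹' T ∩ B, Z ω ∂μ := by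
        rw [hSB, hZG _ (sup_le_sup_right h₁δ mH _ hSBm)]

end MeasureTheory

namespace StructuralModel

variable {Ω 𝒜 𝒳 D E : Type*} {U : Ω → ℝ} {δ : ℕ → Ω → D} {η : ℕ → Ω → E}
  {e : ℕ → Ω → ℝ} {astar : ℕ → 𝒜} {f₀ : D → 𝒳} {f : (s : ℕ) → (Fin s → 𝒳) → 𝒜 → D → 𝒳}
  {a : (s : ℕ) → (Fin (s + 1) → 𝒳) → (Fin s → 𝒜) → ℝ → E → 𝒜}
  {b : (s : ℕ) → (Fin (s + 1) → 𝒳) → 𝒜 → ℝ} {W Wstar : ℕ → Ω → 𝒳} {A : ℕ → Ω → 𝒜}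
  {Ystar : ℕ → Ω → ℝ}

theorem W_eq_Wstar_of_A_eq (hWstar0 : ∀ ω, Wstar 0 ω = W 0 ω)
    (hWt : ∀ s, 1 ≤ s → ∀ ω, W s ω = f s (fun r : Fin s => W r ω) (A (s - 1) ω) (δ s ω))
    (hWstart : ∀ s, 1 ≤ s → ∀ ω,
      Wstar s ω = f s (fun r : Fin s => Wstar r ω) (astar (s - 1)) (δ s ω))
    {ω : Ω} {s : ℕ} (hAs : ∀ r < s, A r ω = astar r) : ∀ r ≤ s, W r ω = Wstar r ω := by
  intro r
  induction r using Nat.strong_induction_on with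
  | _ r ih =>
    intro hr
    rcases r with _ | r
    · exact (hWstar0 ω).symm
    · rw [hWt (r + 1) r.succ_pos ω, hWstart (r + 1) r.succ_pos ω, Nat.add_sub_cancel,
        hAs r (by omega)]
      congr 1
      exact funext fun j => ih j (by omega) (by omega)

variable (U η astar a Wstar) in
def regimeTreatment (s : ℕ) (ω : Ω) : 𝒜 :=
  a s (fun r : Fin (s + 1) => Wstar r ω) (fun r : Fin s => astar r) (U ω) (η s ω)

theorem forall_A_eq_iff_forall_regimeTreatment_eq (hWstar0 : ∀ ω, Wstar 0 ω = W 0 ω)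
    (hWt : ∀ s, 1 ≤ s → ∀ ω, W s ω = f s (fun r : Fin s => W r ω) (A (s - 1) ω) (δ s ω))
    (hWstart : ∀ s, 1 ≤ s → ∀ ω,
      Wstar s ω = f s (fun r : Fin s => Wstar r ω) (astar (s - 1)) (δ s ω))
    (hA : ∀ s ω,
      A s ω = a s (fun r : Fin (s + 1) => W r ω) (fun r : Fin s => A r ω) (U ω) (η s ω))
    (ω : Ω) (n : ℕ) :
    (∀ s ≤ n, A s ω = astar s) ↔ ∀ s ≤ n, regimeTreatment U η astar a Wstar s ω = astar s := by
  have hA_eq : ∀ s, (∀ r < s, A r ω = astar r) →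
      A s ω = regimeTreatment U η astar a Wstar s ω := fun s hs => by
    rw [hA, regimeTreatment]
    congr 2
    · exact funext fun r => W_eq_Wstar_of_A_eq hWstar0 hWt hWstart hs r (by omega)
    · exact funext fun r => hs r r.2
  refine ⟨fun h s hs => hA_eq s (fun r hr => h r (by omega)) ▸ h s hs, fun h s => ?_⟩
  induction s using Nat.strong_induction_on with
  | _ s ih => exact fun hs => (hA_eq s fun r hr => ih r hr (by omega)).trans (h s hs)

theorem eqOn_setOf_forall_A_eq (hWstar0 : ∀ ω, Wstar 0 ω = W 0 ω)
    (hWt : ∀ s, 1 ≤ s → ∀ ω, W s ω = f s (fun r : Fin s => W r ω) (A (s - 1) ω) (δ s ω))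
    (hWstart : ∀ s, 1 ≤ s → ∀ ω,
      Wstar s ω = f s (fun r : Fin s => Wstar r ω) (astar (s - 1)) (δ s ω))
    {k n : ℕ} (hkn : k ≤ n + 1) :
    Set.EqOn (fun ω (r : Fin (k + 1)) => W r ω) (fun ω r => Wstar r ω)
      {ω | ∀ s, s ≤ n → A s ω = astar s} := fun _ hω => funext fun r =>
  W_eq_Wstar_of_A_eq hWstar0 hWt hWstart (fun r hr => hω r (by omega)) r (Nat.le_of_lt_succ r.2)

variable (astar b Wstar) in
def regimeOutcome (s : ℕ) (ω : Ω) : ℝ := b s (fun r : Fin (s + 1) => Wstar r ω) (astar s)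

theorem Ystar_sub_Ystar (hYstar : ∀ s ω,
      Ystar s ω = b s (fun r : Fin (s + 1) => Wstar r ω) (astar s) + U ω + e s ω) (t t' : ℕ) :
    (fun ω => Ystar t ω - Ystar t' ω) = fun ω =>
      (regimeOutcome astar b Wstar t ω - regimeOutcome astar b Wstar t' ω) + (e t ω - e t' ω) := by
  funext ω
  simp only [hYstar, regimeOutcome]
  ring

variable [MeasurableSpace 𝒜] [MeasurableSpace 𝒳] [MeasurableSpace E]

variable (U η) in
abbrev treatmentSigma : MeasurableSpace Ω :=
  MeasurableSpace.comap U inferInstance ⊔ ⨆ s, MeasurableSpace.comap (η s) inferInstance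

theorem measurable_U_treatmentSigma : Measurable[treatmentSigma U η] U :=
  Measurable.of_comap_le le_sup_left

theorem measurable_η_treatmentSigma (s : ℕ) : Measurable[treatmentSigma U η] (η s) :=
  Measurable.of_comap_le
    ((le_iSup (fun s => MeasurableSpace.comap (η s) inferInstance) s).trans le_sup_right)

theorem measurable_regimeTreatment (m : MeasurableSpace Ω)
    (ha : ∀ s, Measurable fun q : (Fin (s + 1) → 𝒳) × (Fin s → 𝒜) × ℝ × E =>
      a s q.1 q.2.1 q.2.2.1 q.2.2.2)
    {s : ℕ} (hWstar : ∀ r ≤ s, Measurable[m] (Wstar r)) (hU : Measurable[m] U)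
    (hη : Measurable[m] (η s)) : Measurable[m] (regimeTreatment U η astar a Wstar s) :=
  (ha s).comp ((measurable_pi_lambda _ fun r : Fin (s + 1) =>
    hWstar r (Nat.le_of_lt_succ r.2)).prodMk (measurable_const.prodMk (hU.prodMk hη)))

theorem measurableSet_setOf_forall_A_eq [MeasurableSingletonClass 𝒜]
    (ha : ∀ s, Measurable fun q : (Fin (s + 1) → 𝒳) × (Fin s → 𝒜) × ℝ × E =>
      a s q.1 q.2.1 q.2.2.1 q.2.2.2)
    (hWstar0 : ∀ ω, Wstar 0 ω = W 0 ω)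
    (hWt : ∀ s, 1 ≤ s → ∀ ω, W s ω = f s (fun r : Fin s => W r ω) (A (s - 1) ω) (δ s ω))
    (hWstart : ∀ s, 1 ≤ s → ∀ ω,
      Wstar s ω = f s (fun r : Fin s => Wstar r ω) (astar (s - 1)) (δ s ω))
    (hA : ∀ s ω,
      A s ω = a s (fun r : Fin (s + 1) => W r ω) (fun r : Fin s => A r ω) (U ω) (η s ω))
    {k n : ℕ} (hn : n ≤ k) :
    MeasurableSet[MeasurableSpace.comap (fun ω (r : Fin (k + 1)) => Wstar r ω) MeasurableSpace.pi
      ⊔ treatmentSigma U η] {ω | ∀ s, s ≤ n → A s ω = astar s} := by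
  have hWstar : ∀ r ≤ k, Measurable[MeasurableSpace.comap (fun ω (r : Fin (k + 1)) => Wstar r ω)
      MeasurableSpace.pi ⊔ treatmentSigma U η] (Wstar r) := fun r hr =>
    ((measurable_pi_apply (⟨r, by omega⟩ : Fin (k + 1))).comp
      (comap_measurable fun ω (r : Fin (k + 1)) => Wstar r ω) :).mono le_sup_left le_rfl
  have hset : {ω | ∀ s, s ≤ n → A s ω = astar s} =
      ⋂ s, ⋂ (_ : s ≤ n), regimeTreatment U η astar a Wstar s ⁻¹' {astar s} := by
    ext ω
    simp [forall_A_eq_iff_forall_regimeTreatment_eq hWstar0 hWt hWstart hA]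
  rw [hset]
  exact .iInter fun s => .iInter fun hs => measurable_regimeTreatment _ ha
    (fun r hr => hWstar r (by omega)) (measurable_U_treatmentSigma.mono le_sup_right le_rfl)
    ((measurable_η_treatmentSigma s).mono le_sup_right le_rfl) (measurableSet_singleton _)

theorem measurable_regimeOutcome (m : MeasurableSpace Ω)
    (hWstar : ∀ k, Measurable[m] fun ω (r : Fin k) => Wstar r ω)
    (hb : ∀ s, Measurable fun q : (Fin (s + 1) → 𝒳) × 𝒜 => b s q.1 q.2) (s : ℕ) :
    Measurable[m] (regimeOutcome astar b Wstar s) :=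
  (hb s).comp ((hWstar (s + 1)).prodMk measurable_const)

variable [MeasurableSpace D]

variable (U δ η e) in
abbrev exogenousSigma : Unit ⊕ (ℕ ⊕ (ℕ ⊕ ℕ)) → MeasurableSpace Ω :=
  Sum.elim (fun _ => MeasurableSpace.comap U inferInstance)
    (Sum.elim (fun s => MeasurableSpace.comap (δ s) inferInstance)
      (Sum.elim (fun s => MeasurableSpace.comap (η s) inferInstance)
        (fun s => MeasurableSpace.comap (e s) inferInstance)))

variable (δ) in
abbrev covariateSigma : MeasurableSpace Ω := ⨆ s, MeasurableSpace.comap (δ s) inferInstance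

theorem measurable_covariateSigma (s : ℕ) : Measurable[covariateSigma δ] (δ s) :=
  Measurable.of_comap_le (le_iSup (fun s => MeasurableSpace.comap (δ s) inferInstance) s)

theorem measurable_Wstar_history (m : MeasurableSpace Ω) (hδ : ∀ s, Measurable[m] (δ s))
    (hf₀ : Measurable f₀) (hf : ∀ s, Measurable fun q : (Fin s → 𝒳) × 𝒜 × D => f s q.1 q.2.1 q.2.2)
    (hWstar0 : ∀ ω, Wstar 0 ω = f₀ (δ 0 ω))
    (hWstart : ∀ s, 1 ≤ s → ∀ ω,
      Wstar s ω = f s (fun r : Fin s => Wstar r ω) (astar (s - 1)) (δ s ω)) (k : ℕ) :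
    Measurable[m] fun ω (r : Fin k) => Wstar r ω := by
  suffices h : ∀ s, Measurable[m] (Wstar s) from measurable_pi_lambda _ fun r => h r
  intro s
  induction s using Nat.strong_induction_on with
  | _ s ih =>
    rcases s with _ | s
    · rw [funext hWstar0]
      exact hf₀.comp (hδ 0)
    · rw [funext (hWstart (s + 1) s.succ_pos)]
      exact (hf _).comp ((measurable_pi_lambda _ fun r : Fin (s + 1) => ih r r.2).prodMk
        (measurable_const.prodMk (hδ _)))

variable [mΩ : MeasurableSpace Ω]

theorem exogenousSigma_le (hU : Measurable U) (hδ : ∀ s, Measurable (δ s))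
    (hη : ∀ s, Measurable (η s)) (he : ∀ s, Measurable (e s)) :
    ∀ i, exogenousSigma U δ η e i ≤ mΩ := by
  rintro (_ | s | s | s)
  exacts [hU.comap_le, (hδ s).comap_le, (hη s).comap_le, (he s).comap_le]

theorem covariateSigma_le (hδ : ∀ s, Measurable (δ s)) : covariateSigma δ ≤ mΩ :=
  iSup_le fun s => (hδ s).comap_le

theorem treatmentSigma_le (hU : Measurable U) (hη : ∀ s, Measurable (η s)) :
    treatmentSigma U η ≤ mΩ :=
  sup_le hU.comap_le (iSup_le fun s => (hη s).comap_le)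

theorem indep_covariateSigma_treatmentSigma {P : Measure Ω} (hU : Measurable U)
    (hδ : ∀ s, Measurable (δ s)) (hη : ∀ s, Measurable (η s)) (he : ∀ s, Measurable (e s))
    (hindep : iIndep (exogenousSigma U δ η e) P) :
    Indep (covariateSigma δ) (treatmentSigma U η) P := by
  have := indep_iSup_of_disjoint (exogenousSigma_le hU hδ hη he) hindep
    (disjoint_compl_right (a := Set.range fun s => Sum.inr (Sum.inl s)))
  refine indep_of_indep_of_le_right (indep_of_indep_of_le_left this ?_) ?_
  · exact iSup_le fun s => le_iSup₂_of_le (Sum.inr (Sum.inl s)) ⟨s, rfl⟩ le_rfl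
  · refine sup_le (le_iSup₂_of_le (Sum.inl ()) (by simp) le_rfl) (iSup_le fun s => ?_)
    exact le_iSup₂_of_le (Sum.inr (Sum.inr (Sum.inl s))) (by simp) le_rfl

theorem indep_noise_covariateSigma_sup_treatmentSigma {P : Measure Ω} (hU : Measurable U)
    (hδ : ∀ s, Measurable (δ s)) (hη : ∀ s, Measurable (η s)) (he : ∀ s, Measurable (e s))
    (hindep : iIndep (exogenousSigma U δ η e) P) (s : ℕ) :
    Indep (MeasurableSpace.comap (e s) inferInstance)
      (covariateSigma δ ⊔ treatmentSigma U η) P := by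
  have := indep_iSup_of_disjoint (exogenousSigma_le hU hδ hη he) hindep
    (disjoint_compl_right (a := {Sum.inr (Sum.inr (Sum.inr s))}))
  refine indep_of_indep_of_le_right (indep_of_indep_of_le_left this ?_) ?_
  · exact le_iSup₂_of_le (Sum.inr (Sum.inr (Sum.inr s))) rfl le_rfl
  · refine sup_le (iSup_le fun r => le_iSup₂_of_le (Sum.inr (Sum.inl r)) (by simp) le_rfl)
      (sup_le (le_iSup₂_of_le (Sum.inl ()) (by simp) le_rfl) (iSup_le fun r => ?_))
    exact le_iSup₂_of_le (Sum.inr (Sum.inr (Sum.inl r))) (by simp) le_rfl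

theorem measurable_W_and_A (hU : Measurable U) (hδ : ∀ s, Measurable (δ s))
    (hη : ∀ s, Measurable (η s)) (hf₀ : Measurable f₀)
    (hf : ∀ s, Measurable fun q : (Fin s → 𝒳) × 𝒜 × D => f s q.1 q.2.1 q.2.2)
    (ha : ∀ s, Measurable fun q : (Fin (s + 1) → 𝒳) × (Fin s → 𝒜) × ℝ × E =>
      a s q.1 q.2.1 q.2.2.1 q.2.2.2)
    (hW0 : ∀ ω, W 0 ω = f₀ (δ 0 ω))
    (hWt : ∀ s, 1 ≤ s → ∀ ω, W s ω = f s (fun r : Fin s => W r ω) (A (s - 1) ω) (δ s ω))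
    (hA : ∀ s ω,
      A s ω = a s (fun r : Fin (s + 1) => W r ω) (fun r : Fin s => A r ω) (U ω) (η s ω))
    (s : ℕ) : Measurable (W s) ∧ Measurable (A s) := by
  induction s using Nat.strong_induction_on with
  | _ s ih =>
    have hWs : Measurable (W s) := by
      rcases s with _ | s
      · rw [funext hW0]
        exact hf₀.comp (hδ 0)
      · rw [funext (hWt (s + 1) s.succ_pos)]
        exact (hf _).comp ((measurable_pi_lambda _ fun r : Fin (s + 1) => (ih r r.2).1).prodMk
          ((ih s s.lt_succ_self).2.prodMk (hδ _)))
    refine ⟨hWs, ?_⟩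
    rw [funext (hA s)]
    exact (ha s).comp ((measurable_pi_lambda _
      (Fin.lastCases (motive := fun r : Fin (s + 1) => Measurable (W r)) hWs
        fun r => (ih r r.2).1)).prodMk
      ((measurable_pi_lambda _ fun r : Fin s => (ih r r.2).2).prodMk (hU.prodMk (hη s))))

theorem setIntegral_noise_eq_zero {P : Measure Ω} [IsFiniteMeasure P] (hU : Measurable U)
    (hδ : ∀ s, Measurable (δ s)) (hη : ∀ s, Measurable (η s)) (he : ∀ s, Measurable (e s))
    (hindep : iIndep (exogenousSigma U δ η e) P) {s : ℕ} (hint : Integrable (e s) P)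
    (hmean : ∫ ω, e s ω ∂P = 0) {S : Set Ω}
    (hS : MeasurableSet[covariateSigma δ ⊔ treatmentSigma U η] S) : ∫ ω in S, e s ω ∂P = 0 :=
  setIntegral_eq_zero_of_indep (he s).comap_le
    (sup_le (covariateSigma_le hδ) (treatmentSigma_le hU hη))
    (indep_noise_covariateSigma_sup_treatmentSigma hU hδ hη he hindep s)
    (comap_measurable (e s)).stronglyMeasurable hint hmean hS

theorem exists_measurable_comp_ae_eq_condExp_cond_Ystar_sub {P : Measure Ω} [IsFiniteMeasure P]
    (hU : Measurable U) (hδ : ∀ s, Measurable (δ s)) (hη : ∀ s, Measurable (η s))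
    (he : ∀ s, Measurable (e s)) (hindep : iIndep (exogenousSigma U δ η e) P)
    (hf₀ : Measurable f₀) (hf : ∀ s, Measurable fun q : (Fin s → 𝒳) × 𝒜 × D => f s q.1 q.2.1 q.2.2)
    (hWstar0 : ∀ ω, Wstar 0 ω = f₀ (δ 0 ω))
    (hWstart : ∀ s, 1 ≤ s → ∀ ω,
      Wstar s ω = f s (fun r : Fin s => Wstar r ω) (astar (s - 1)) (δ s ω))
    (hb : ∀ s, Measurable fun q : (Fin (s + 1) → 𝒳) × 𝒜 => b s q.1 q.2)
    (hbbd : ∀ s, ∃ C, ∀ x aa, |b s x aa| ≤ C)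
    (hYstar : ∀ s ω,
      Ystar s ω = b s (fun r : Fin (s + 1) => Wstar r ω) (astar s) + U ω + e s ω)
    {t t' : ℕ} (het : Integrable (e t) P) (het' : Integrable (e t') P)
    (hemean : ∫ ω, e t ω ∂P = 0) (hemean' : ∫ ω, e t' ω ∂P = 0) (k : ℕ) :
    ∃ ψ : (Fin (k + 1) → 𝒳) → ℝ, Measurable ψ ∧ ∀ (X : Ω → Fin (k + 1) → 𝒳) (B : Set Ω),
      Measurable X → MeasurableSet[MeasurableSpace.comap (fun ω (r : Fin (k + 1)) => Wstar r ω)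
        MeasurableSpace.pi ⊔ treatmentSigma U η] B → P B ≠ 0 →
      Set.EqOn X (fun ω r => Wstar r ω) B →
      ψ ∘ X =ᵐ[P[|B]] P[|B][fun ω => Ystar t ω - Ystar t' ω|MeasurableSpace.comap X
        MeasurableSpace.pi] := by
  have hWstar := measurable_Wstar_history _ measurable_covariateSigma hf₀ hf hWstar0 hWstart
  have hg := measurable_regimeOutcome (astar := astar) _ hWstar hb
  have hgi : ∀ s, Integrable (regimeOutcome astar b Wstar s) P := fun s => by
    obtain ⟨C, hC⟩ := hbbd s
    exact .of_bound ((hg s).mono (covariateSigma_le hδ) le_rfl).aestronglyMeasurable C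
      (ae_of_all _ fun ω => hC _ _)
  have hGi : Integrable (fun ω =>
      regimeOutcome astar b Wstar t ω - regimeOutcome astar b Wstar t' ω) P :=
    (hgi t).sub (hgi t')
  have hNi : Integrable (fun ω => e t ω - e t' ω) P := het.sub het'
  refine exists_measurable_comp_ae_eq_condExp_cond
    (G := fun ω => regimeOutcome astar b Wstar t ω - regimeOutcome astar b Wstar t' ω)
    (covariateSigma_le hδ) (treatmentSigma_le hU hη)
    (indep_covariateSigma_treatmentSigma hU hδ hη he hindep)
    (hWstar (k + 1)) ((hg t).sub (hg t')).stronglyMeasurable hGi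
    (by rw [Ystar_sub_Ystar hYstar]; exact hGi.add hNi) fun S hS => ?_
  rw [Ystar_sub_Ystar hYstar, integral_add hGi.integrableOn hNi.integrableOn,
    integral_sub het.integrableOn het'.integrableOn,
    setIntegral_noise_eq_zero hU hδ hη he hindep het hemean hS,
    setIntegral_noise_eq_zero hU hδ hη he hindep het' hemean' hS, sub_zero, add_zero]

end StructuralModel

open StructuralModel

theorem parallel_trends_additive_confounding_general
    {Ω : Type*} [inst : MeasurableSpace Ω] (P : Measure Ω) [IsProbabilityMeasure P]
    (τ : ℕ)
    {𝒜 : Type*} [MeasurableSpace 𝒜] [MeasurableSingletonClass 𝒜]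
    {𝒳 : Type*} [MeasurableSpace 𝒳]
    {D : Type*} [MeasurableSpace D]
    {E : Type*} [MeasurableSpace E]
    (U : Ω → ℝ) (hU : Measurable U)
    (δ : ℕ → Ω → D) (hδ : ∀ s, Measurable (δ s))
    (η : ℕ → Ω → E) (hη : ∀ s, Measurable (η s))
    (e : ℕ → Ω → ℝ) (he : ∀ s, Measurable (e s))
    (heint : ∀ s, s ≤ τ → Integrable (e s) P)
    (hemean : ∀ s, s ≤ τ → ∫ ω, e s ω ∂P = 0)
    (hindep : iIndep
      (Sum.elim (fun _ : Unit => MeasurableSpace.comap U inferInstance)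
        (Sum.elim (fun s : ℕ => MeasurableSpace.comap (δ s) inferInstance)
          (Sum.elim (fun s : ℕ => MeasurableSpace.comap (η s) inferInstance)
            (fun s : ℕ => MeasurableSpace.comap (e s) inferInstance))))
      P)
    (astar : ℕ → 𝒜)
    (f₀ : D → 𝒳) (hf₀ : Measurable f₀)
    (f : (s : ℕ) → (Fin s → 𝒳) → 𝒜 → D → 𝒳)
    (hf : ∀ s, Measurable fun q : (Fin s → 𝒳) × 𝒜 × D => f s q.1 q.2.1 q.2.2)
    (a : (s : ℕ) → (Fin (s + 1) → 𝒳) → (Fin s → 𝒜) → ℝ → E → 𝒜)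
    (ha : ∀ s, Measurable fun q : (Fin (s + 1) → 𝒳) × (Fin s → 𝒜) × ℝ × E =>
      a s q.1 q.2.1 q.2.2.1 q.2.2.2)
    (b : (s : ℕ) → (Fin (s + 1) → 𝒳) → 𝒜 → ℝ)
    (hb : ∀ s, Measurable fun q : (Fin (s + 1) → 𝒳) × 𝒜 => b s q.1 q.2)
    (hbbd : ∀ s, ∃ C, ∀ x aa, |b s x aa| ≤ C)
    (W : ℕ → Ω → 𝒳) (A : ℕ → Ω → 𝒜)
    (hW0 : ∀ ω, W 0 ω = f₀ (δ 0 ω))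
    (hWt : ∀ s, 1 ≤ s → ∀ ω, W s ω = f s (fun r : Fin s => W r ω) (A (s - 1) ω) (δ s ω))
    (hA : ∀ s ω,
      A s ω = a s (fun r : Fin (s + 1) => W r ω) (fun r : Fin s => A r ω) (U ω) (η s ω))
    (Wstar : ℕ → Ω → 𝒳) (Ystar : ℕ → Ω → ℝ)
    (hWstar0 : ∀ ω, Wstar 0 ω = W 0 ω)
    (hWstart : ∀ s, 1 ≤ s → ∀ ω,
      Wstar s ω = f s (fun r : Fin s => Wstar r ω) (astar (s - 1)) (δ s ω))
    (hYstar : ∀ s ω, Ystar s ω = b s (fun r : Fin (s + 1) => Wstar r ω) (astar s) + U ω + e s ω)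
    (B : ℕ → Set Ω) (hB : ∀ m, B m = {ω | ∀ s, s ≤ m → A s ω = astar s})
    (𝒲 : ℕ → MeasurableSpace Ω)
    (h𝒲 : ∀ k, 𝒲 k =
      MeasurableSpace.comap (fun ω (r : Fin (k + 1)) => W r ω) MeasurableSpace.pi) :
    ∀ t, 1 ≤ t → t ≤ τ → ∀ k, k < t → 0 < P (B k) →
      ∃ h : Ω → ℝ, Measurable[𝒲 k] h ∧
        h =ᵐ[if k = 0 then P else P[|B (k - 1)]]
          (if k = 0 then P else P[|B (k - 1)])[fun ω => Ystar t ω - Ystar (t - 1) ω|𝒲 k] ∧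
        h =ᵐ[P[|B k]] (P[|B k])[fun ω => Ystar t ω - Ystar (t - 1) ω|𝒲 k] := by
  intro t ht htτ k hkt hPBk
  rw [h𝒲 k]
  obtain ⟨ψ, hψ, hversion⟩ := exists_measurable_comp_ae_eq_condExp_cond_Ystar_sub hU hδ hη he
    hindep hf₀ hf (fun ω => (hWstar0 ω).trans (hW0 ω)) hWstart hb hbbd hYstar (heint t htτ)
    (heint (t - 1) (by omega)) (hemean t htτ) (hemean (t - 1) (by omega)) k
  have hX : Measurable fun ω (r : Fin (k + 1)) => W r ω := measurable_pi_lambda _ fun r =>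
    (measurable_W_and_A hU hδ hη hf₀ hf ha hW0 hWt hA r).1
  have hversion_B : ∀ n ≤ k, k ≤ n + 1 → P (B n) ≠ 0 →
      ψ ∘ (fun ω (r : Fin (k + 1)) => W r ω) =ᵐ[P[|B n]]
        P[|B n][fun ω => Ystar t ω - Ystar (t - 1) ω|MeasurableSpace.comap
          (fun ω (r : Fin (k + 1)) => W r ω) MeasurableSpace.pi] := fun n hnk hkn hPB => by
    rw [hB n] at hPB ⊢
    exact hversion _ _ hX (measurableSet_setOf_forall_A_eq ha hWstar0 hWt hWstart hA hnk) hPB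
      (eqOn_setOf_forall_A_eq hWstar0 hWt hWstart hkn)
  refine ⟨ψ ∘ _, hψ.comp (comap_measurable _), ?_, hversion_B k le_rfl (by omega) hPBk.ne'⟩
  split_ifs with hk0
  · subst hk0
    rw [← cond_univ (μ := P)]
    exact hversion _ _ hX .univ (by simp) fun ω _ => funext fun r => by
      rw [Fin.fin_one_eq_zero r]
      exact (hWstar0 ω).symm
  · refine hversion_B (k - 1) (by omega) (by omega) (hPBk.trans_le (measure_mono ?_)).ne'
    rw [hB, hB]
    exact fun ω hω s hs => hω s (by omega)

/-- Parallel trends holds under additive unmeasured confounding in a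
structural equation model with treatment-covariate feedback (the claim verified for the
paper's simulation design). On a probability space carrying mutually independent random
elements `U` (real-valued), `δ t`, `η t` (valued in standard Borel spaces) and
`e t` (integrable, mean-zero real noise), with countable discrete treatment space `𝒜`,
target regime `astar`, and measurable structural functions `f₀, f, a, b` (each `b t`
bounded), define the observed process `W, A, Y` and the counterfactual process
`Wstar, Ystar` by the structural equations; let `B m = {A 0 = astar 0, …, A m = astar m}`
and `𝒲 k = σ(W 0, …, W k)`. Then for every `1 ≤ t ≤ τ` and `k < t` with `P (B k) > 0`,
there is a `𝒲 k`-measurable `h` that is simultaneously a version of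
`E[Ystar t - Ystar (t-1) | 𝒲 k]` under `P[|B (k-1)]` (with `B₋₁ := Ω`, i.e. under `P`
when `k = 0`) and under `P[|B k]`: the conditional parallel trends assumption holds for
the regime `astar` even though `U` confounds treatment and outcome and covariates are
affected by prior treatment. -/
theorem parallel_trends_additive_confounding
    {Ω : Type*} [inst : MeasurableSpace Ω] (P : Measure Ω) [IsProbabilityMeasure P]
    (τ : ℕ)
    {𝒜 : Type*} [MeasurableSpace 𝒜] [MeasurableSingletonClass 𝒜] [Countable 𝒜]
    {𝒳 : Type*} [MeasurableSpace 𝒳] [StandardBorelSpace 𝒳]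
    {D : Type*} [MeasurableSpace D] [StandardBorelSpace D]
    {E : Type*} [MeasurableSpace E] [StandardBorelSpace E]
    (U : Ω → ℝ) (hU : Measurable U)
    (δ : ℕ → Ω → D) (hδ : ∀ s, Measurable (δ s))
    (η : ℕ → Ω → E) (hη : ∀ s, Measurable (η s))
    (e : ℕ → Ω → ℝ) (he : ∀ s, Measurable (e s))
    (heint : ∀ s, s ≤ τ → Integrable (e s) P)
    (hemean : ∀ s, s ≤ τ → ∫ ω, e s ω ∂P = 0)
    (hindep : iIndep
      (Sum.elim (fun _ : Unit => MeasurableSpace.comap U inferInstance)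
        (Sum.elim (fun s : ℕ => MeasurableSpace.comap (δ s) inferInstance)
          (Sum.elim (fun s : ℕ => MeasurableSpace.comap (η s) inferInstance)
            (fun s : ℕ => MeasurableSpace.comap (e s) inferInstance))))
      P)
    (astar : ℕ → 𝒜)
    (f₀ : D → 𝒳) (hf₀ : Measurable f₀)
    (f : (s : ℕ) → (Fin s → 𝒳) → 𝒜 → D → 𝒳)
    (hf : ∀ s, Measurable fun q : (Fin s → 𝒳) × 𝒜 × D => f s q.1 q.2.1 q.2.2)
    (a : (s : ℕ) → (Fin (s + 1) → 𝒳) → (Fin s → 𝒜) → ℝ → E → 𝒜)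
    (ha : ∀ s, Measurable fun q : (Fin (s + 1) → 𝒳) × (Fin s → 𝒜) × ℝ × E =>
      a s q.1 q.2.1 q.2.2.1 q.2.2.2)
    (b : (s : ℕ) → (Fin (s + 1) → 𝒳) → 𝒜 → ℝ)
    (hb : ∀ s, Measurable fun q : (Fin (s + 1) → 𝒳) × 𝒜 => b s q.1 q.2)
    (hbbd : ∀ s, ∃ C, ∀ x aa, |b s x aa| ≤ C)
    (W : ℕ → Ω → 𝒳) (A : ℕ → Ω → 𝒜) (Y : ℕ → Ω → ℝ)
    (hW0 : ∀ ω, W 0 ω = f₀ (δ 0 ω))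
    (hWt : ∀ s, 1 ≤ s → ∀ ω, W s ω = f s (fun r : Fin s => W r ω) (A (s - 1) ω) (δ s ω))
    (hA : ∀ s ω,
      A s ω = a s (fun r : Fin (s + 1) => W r ω) (fun r : Fin s => A r ω) (U ω) (η s ω))
    (hY : ∀ s ω, Y s ω = b s (fun r : Fin (s + 1) => W r ω) (A s ω) + U ω + e s ω)
    (Wstar : ℕ → Ω → 𝒳) (Ystar : ℕ → Ω → ℝ)
    (hWstar0 : ∀ ω, Wstar 0 ω = W 0 ω)
    (hWstart : ∀ s, 1 ≤ s → ∀ ω,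
      Wstar s ω = f s (fun r : Fin s => Wstar r ω) (astar (s - 1)) (δ s ω))
    (hYstar : ∀ s ω, Ystar s ω = b s (fun r : Fin (s + 1) => Wstar r ω) (astar s) + U ω + e s ω)
    (B : ℕ → Set Ω) (hB : ∀ m, B m = {ω | ∀ s, s ≤ m → A s ω = astar s})
    (𝒲 : ℕ → MeasurableSpace Ω)
    (h𝒲 : ∀ k, 𝒲 k =
      MeasurableSpace.comap (fun ω (r : Fin (k + 1)) => W r ω) MeasurableSpace.pi) :
    ∀ t, 1 ≤ t → t ≤ τ → ∀ k, k < t → 0 < P (B k) →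
      ∃ h : Ω → ℝ, Measurable[𝒲 k] h ∧
        h =ᵐ[if k = 0 then P else P[|B (k - 1)]]
          (if k = 0 then P else P[|B (k - 1)])[fun ω => Ystar t ω - Ystar (t - 1) ω|𝒲 k] ∧
        h =ᵐ[P[|B k]] (P[|B k])[fun ω => Ystar t ω - Ystar (t - 1) ω|𝒲 k] :=
  parallel_trends_additive_confounding_general (inst := inst) P τ U hU δ hδ η hη e he heint hemean
    hindep astar f₀ hf₀ f hf a ha b hb hbbd W A hW0 hWt hA Wstar Ystar hWstar0 hWstart hYstar B hB 𝒲
    h𝒲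
end
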